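/- arXiv:2512.23996 — 6 statements merged into one kernel-verified Lean document; each statement's English description precedes it below -/
import Mathlib

section
/- Let T be a finite rooted tree. For a random walk from the root that, at each internal node with d children, moves to a uniformly random child until reaching a leaf, the output defined as the product of the branching factors d along the path is an unbiased estimator of the number of leaves of T: its expected value equals the number of leaves. -/
/-- A finite rooted tree: a node together with its list of child subtrees.
A node with no children is a leaf; every internal node has at least one child. -/
inductive RTree where
  | node : List RTree → RTree

namespace RTree

/-- The children of the root. -/
def children : RTree → List RTree
  | node cs => cs

/-- The number of leaves of a finite rooted tree. -/
def leaves : RTree → ℕ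
  | node [] => 1
  | node (c :: cs) => ((c :: cs).attach.map (fun x => leaves x.1)).sum
decreasing_by
  all_goals
    have h := List.sizeOf_lt_of_mem x.2
    simp only [List.cons.sizeOf_spec, RTree.node.sizeOf_spec] at h ⊢
    omega

/-- All root-to-leaf random walks of Knuth's estimator, as a list of
(probability, output) pairs: at each internal node with `d` children the walk
moves to a uniformly random child (probability `1/d`) and the output is the
product of the branching factors `d` along the path. -/
noncomputable def walks : RTree → List (ℝ × ℝ)
  | node [] => [(1, 1)]
  | node (c :: cs) =>
      (c :: cs).attach.flatMap (fun x =>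
        (walks x.1).map (fun pv =>
          (pv.1 / ((c :: cs).length : ℝ), pv.2 * ((c :: cs).length : ℝ))))
decreasing_by
  all_goals
    have h := List.sizeOf_lt_of_mem x.2
    simp only [List.cons.sizeOf_spec, RTree.node.sizeOf_spec] at h ⊢
    omega

end RTree

/-! The walk reaching a given leaf has probability `1 / ∏ d` and output `∏ d` for the same
branching factors `d`, so every term of the expectation is `1`; and there is one walk per
leaf. -/

namespace RTree

@[elab_as_elim]
theorem leaf_internal_induction {P : RTree → Prop} (leaf : P (node []))
    (internal : ∀ c cs, (∀ t ∈ c :: cs, P t) → P (node (c :: cs))) : ∀ t, P t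
  | node [] => leaf
  | node (c :: cs) => internal c cs fun t _ => leaf_internal_induction leaf internal t

theorem prob_mul_output_eq_one_of_mem_walks (t : RTree) :
    ∀ pv ∈ walks t, pv.1 * pv.2 = 1 := by
  induction t using leaf_internal_induction with
  | leaf => simp [walks]
  | internal c cs ih =>
    simp only [walks, List.mem_flatMap, List.mem_map, List.mem_attach, true_and]
    rintro _ ⟨⟨x, hx⟩, qv, hqv, rfl⟩
    have hd : ((c :: cs).length : ℝ) ≠ 0 := Nat.cast_ne_zero.mpr (by simp)
    field_simp
    exact ih x hx qv hqv

theorem length_walks (t : RTree) : (walks t).length = leaves t := by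
  induction t using leaf_internal_induction with
  | leaf => simp [walks, leaves]
  | internal c cs ih =>
    rw [walks, leaves, List.length_flatMap]
    simp only [List.length_map]
    exact congrArg List.sum (List.map_congr_left fun x _ => ih x.1 x.2)

end RTree

/-- **Knuth's estimator is unbiased**: for a finite rooted tree `t`, the expected
value of the output of the random walk (the product of branching factors along a
uniformly random root-to-leaf path) equals the number of leaves of `t`. -/
theorem knuth_estimator_unbiased (t : RTree) :
    ((RTree.walks t).map (fun pv => pv.1 * pv.2)).sum = (RTree.leaves t : ℝ) := by
  rw [List.map_congr_left (RTree.prob_mul_output_eq_one_of_mem_walks t), List.map_const',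
    List.sum_replicate, RTree.length_walks, nsmul_eq_mul, mul_one]
end

section
/- Let G be a finite DAG with a unique source s such that every node is reachable from s. For a random walk from s that at each node with out-degree d > 0 moves to a uniformly random successor, the output ∏_i (d_i / e_i) over visited nodes n_i — where d_i is the out-degree of n_i (taken as 1 at a sink) and e_i its in-degree (taken as 1 at the source) — is an unbiased estimator of the number of sinks of G. -/
open Classical in
/-- Out-degree of a vertex in a finite directed graph. -/
noncomputable def outDeg {V : Type*} [Fintype V] (E : V → V → Prop) (v : V) : ℕ :=
  (Finset.univ.filter (fun u => E v u)).card

open Classical in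
/-- In-degree of a vertex in a finite directed graph. -/
noncomputable def inDeg {V : Type*} [Fintype V] (E : V → V → Prop) (v : V) : ℕ :=
  (Finset.univ.filter (fun u => E u v)).card

/-- A (complete) walk of Pitt's estimator: a nonempty list of vertices starting at
the source `s`, following edges of `E`, and ending at a sink. -/
def IsPittWalk {V : Type*} [Fintype V] (E : V → V → Prop) (s : V) (l : List V) : Prop :=
  l.head? = some s ∧ l.Chain' E ∧ ∀ w, l.getLast? = some w → outDeg E w = 0

/-- The probability of a given walk: at each non-final vertex the walk moves to a
uniformly random out-neighbor. -/
noncomputable def walkProb {V : Type*} [Fintype V] (E : V → V → Prop) (l : List V) : ℝ :=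
  (l.dropLast.map (fun v => ((outDeg E v : ℝ))⁻¹)).prod

/-- The output of Pitt's estimator along a walk: the product over all visited
vertices of (out-degree)/(in-degree), with the out-degree of a sink and the
in-degree of the source both taken to be `1`. -/
noncomputable def walkOutput {V : Type*} [Fintype V] (E : V → V → Prop) (l : List V) : ℝ :=
  (l.map (fun v =>
    ((if outDeg E v = 0 then 1 else (outDeg E v : ℝ))) /
    ((if inDeg E v = 0 then 1 else (inDeg E v : ℝ))))).prod

/-!
Along a walk `s = v₀ → ⋯ → v_k` ending at a sink, the probability `∏_{i<k} 1/d(vᵢ)` cancels the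
out-degrees in the output, so probability times output is the weight `∏ᵢ 1/e(vᵢ)` of the path.
The expectation is therefore the sum over sinks `t` of the total weight of the paths from `s`
to `t`, and the total weight of the paths from `s` to any vertex `v` is `1`: by induction along
the DAG, splitting the paths to `v ≠ s` by their penultimate vertex gives `e(v) · (1/e(v)) = 1`,
since `v` is not a source and so has `e(v)` in-neighbours.
-/

open Finset Relation

theorem List.IsChain.nodup_of_acyclic {V : Type*} {E : V → V → Prop}
    (hacyclic : ∀ v, ¬ TransGen E v v) {l : List V} (hl : l.IsChain E) : l.Nodup :=
  haveI : IsTrans V (TransGen E) := ⟨fun _ _ _ => TransGen.trans⟩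
  haveI : Std.Irrefl (TransGen E) := ⟨hacyclic⟩
  (List.isChain_iff_pairwise.1 (hl.imp fun _ _ => TransGen.single)).nodup

section Pitt

variable {V : Type*} [Fintype V] {E : V → V → Prop}

open Classical in
noncomputable def inNbrs (E : V → V → Prop) (v : V) : Finset V :=
  univ.filter (E · v)

theorem card_inNbrs (v : V) : #(inNbrs E v) = inDeg E v := rfl

theorem outDeg_ne_zero_of_rel {a b : V} (h : E a b) : outDeg E a ≠ 0 := by
  classical
  exact card_ne_zero.2 ⟨b, by simpa using h⟩

noncomputable def inDegOrOne (E : V → V → Prop) (v : V) : ℝ :=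
  if inDeg E v = 0 then 1 else (inDeg E v : ℝ)

noncomputable def pathWeight (E : V → V → Prop) (l : List V) : ℝ :=
  (l.map fun v => (inDegOrOne E v)⁻¹).prod

theorem pathWeight_cons (v : V) (l : List V) :
    pathWeight E (v :: l) = (inDegOrOne E v)⁻¹ * pathWeight E l := by
  simp [pathWeight]

theorem pathWeight_append_singleton (l : List V) (v : V) :
    pathWeight E (l ++ [v]) = pathWeight E l * (inDegOrOne E v)⁻¹ := by
  simp [pathWeight]

theorem walkProb_mul_walkOutput :
    ∀ {l : List V}, l.IsChain E → (∀ w ∈ l.getLast?, outDeg E w = 0) →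
      walkProb E l * walkOutput E l = pathWeight E l
  | [], _, _ => by simp [walkProb, walkOutput, pathWeight]
  | [a], _, hsink => by simp [walkProb, walkOutput, pathWeight, inDegOrOne, hsink a rfl]
  | a :: b :: t, hl, hsink => by
    have ha : outDeg E a ≠ 0 := outDeg_ne_zero_of_rel (List.isChain_cons_cons.1 hl).1
    have ih := walkProb_mul_walkOutput (l := b :: t) hl.tail (by simpa using hsink)
    have hprob : walkProb E (a :: b :: t) = (outDeg E a : ℝ)⁻¹ * walkProb E (b :: t) := by
      simp [walkProb]
    have houtput : walkOutput E (a :: b :: t) =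
        outDeg E a / inDegOrOne E a * walkOutput E (b :: t) := by
      rw [walkOutput, List.map_cons, List.prod_cons, if_neg ha]
      rfl
    rw [hprob, houtput, pathWeight_cons, ← ih]
    field_simp

open Classical in
noncomputable def pathsTo (E : V → V → Prop) (s v : V) : Finset (List V) :=
  (List.finite_length_le V (Fintype.card V)).toFinset.filter
    fun l => l.head? = some s ∧ l.IsChain E ∧ l.getLast? = some v

theorem mem_pathsTo (hacyclic : ∀ v, ¬ TransGen E v v) {s v : V} {l : List V} :
    l ∈ pathsTo E s v ↔ l.head? = some s ∧ l.IsChain E ∧ l.getLast? = some v := by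
  simp only [pathsTo, mem_filter, Set.Finite.mem_toFinset, Set.mem_ofPred_eq,
    and_iff_right_iff_imp]
  exact fun h => (h.2.1.nodup_of_acyclic hacyclic).length_le_card

theorem pairwiseDisjoint_pathsTo (S : Set V) (s : V) : S.PairwiseDisjoint (pathsTo E s) := by
  classical
  intro v _ w _ hvw
  refine disjoint_filter.2 fun l _ hv hw => hvw ?_
  simpa using hv.2.2.symm.trans hw.2.2

theorem pathsTo_self (hacyclic : ∀ v, ¬ TransGen E v v) (s : V) : pathsTo E s s = {[s]} := by
  ext l
  rw [mem_pathsTo hacyclic, mem_singleton]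
  constructor
  · rintro ⟨hs, hl, hlast⟩
    obtain ⟨t, rfl⟩ := List.head?_eq_some_iff.1 hs
    cases t with
    | nil => rfl
    | cons a t =>
      have hst : s ∈ a :: t := List.mem_of_getLast? (by simpa using hlast)
      exact absurd hst (List.nodup_cons.1 (hl.nodup_of_acyclic hacyclic)).1
  · rintro rfl
    exact ⟨rfl, List.isChain_singleton s, rfl⟩

theorem pathsTo_eq_biUnion [DecidableEq V] (hacyclic : ∀ v, ¬ TransGen E v v) {s v : V}
    (hvs : v ≠ s) :
    pathsTo E s v = (inNbrs E v).biUnion fun u =>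
      (pathsTo E s u).map ⟨fun l => l ++ [v], List.append_left_injective [v]⟩ := by
  ext l
  simp only [mem_biUnion, mem_map, Function.Embedding.coeFn_mk, inNbrs, mem_filter, mem_univ,
    true_and, mem_pathsTo hacyclic]
  constructor
  · rintro ⟨hs, hl, hlast⟩
    obtain ⟨p, rfl⟩ := List.getLast?_eq_some_iff.1 hlast
    have hp : p ≠ [] := by
      rintro rfl
      exact hvs (by simpa using hs)
    obtain ⟨u, hu⟩ := Option.isSome_iff_exists.1 (List.getLast?_isSome.2 hp)
    obtain ⟨hpl, -, hlink⟩ := List.isChain_append.1 hl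
    exact ⟨u, hlink u hu v rfl, p, ⟨by rwa [List.head?_append_of_ne_nil _ hp] at hs, hpl, hu⟩, rfl⟩
  · rintro ⟨u, huv, p, ⟨hs, hpl, hu⟩, rfl⟩
    have hp : p ≠ [] := by
      rintro rfl
      simp at hs
    refine ⟨by rwa [List.head?_append_of_ne_nil _ hp], hpl.append (List.isChain_singleton v) ?_,
      List.getLast?_concat⟩
    simpa [hu] using huv

theorem sum_pathWeight_pathsTo (hacyclic : ∀ v, ¬ TransGen E v v) {s : V}
    (hsource : inDeg E s = 0) (huniqueSource : ∀ v, inDeg E v = 0 → v = s) (v : V) :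
    ∑ l ∈ pathsTo E s v, pathWeight E l = 1 := by
  classical
  have : IsTrans V (TransGen E) := ⟨fun _ _ _ => TransGen.trans⟩
  have : Std.Irrefl (TransGen E) := ⟨hacyclic⟩
  induction v using (Finite.wellFounded_of_trans_of_irrefl (TransGen E)).induction with
  | _ v ih =>
  rcases eq_or_ne v s with rfl | hvs
  · simp [pathsTo_self hacyclic, pathWeight, inDegOrOne, hsource]
  have hv : inDeg E v ≠ 0 := fun h => hvs (huniqueSource v h)
  have hdisj : (inNbrs E v : Set V).PairwiseDisjoint fun u =>
      (pathsTo E s u).map ⟨fun l => l ++ [v], List.append_left_injective [v]⟩ :=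
    fun u _ w _ huw => (disjoint_map _).2 (pairwiseDisjoint_pathsTo Set.univ s trivial trivial huw)
  calc ∑ l ∈ pathsTo E s v, pathWeight E l
      = ∑ u ∈ inNbrs E v, ∑ l ∈ pathsTo E s u, pathWeight E l * (inDeg E v : ℝ)⁻¹ := by
        simp [pathsTo_eq_biUnion hacyclic hvs, sum_biUnion hdisj, pathWeight_append_singleton,
          inDegOrOne, hv]
    _ = ∑ u ∈ inNbrs E v, (inDeg E v : ℝ)⁻¹ := sum_congr rfl fun u hu => by
        rw [← sum_mul, ih u (TransGen.single (by simpa [inNbrs] using hu)), one_mul]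
    _ = 1 := by
        rw [sum_const, card_inNbrs, nsmul_eq_mul, mul_inv_cancel₀ (Nat.cast_ne_zero.2 hv)]

theorem sum_walkProb_mul_walkOutput_pathsTo (hacyclic : ∀ v, ¬ TransGen E v v) {s t : V}
    (hsource : inDeg E s = 0) (huniqueSource : ∀ v, inDeg E v = 0 → v = s)
    (ht : outDeg E t = 0) :
    ∑ l ∈ pathsTo E s t, walkProb E l * walkOutput E l = 1 := by
  rw [← sum_pathWeight_pathsTo hacyclic hsource huniqueSource t]
  refine sum_congr rfl fun l hl => ?_
  obtain ⟨-, hchain, hlast⟩ := (mem_pathsTo hacyclic).1 hl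
  exact walkProb_mul_walkOutput hchain (by simpa [hlast] using ht)

theorem isPittWalk_iff (hacyclic : ∀ v, ¬ TransGen E v v) {s : V} {l : List V} :
    IsPittWalk E s l ↔ ∃ t, outDeg E t = 0 ∧ l ∈ pathsTo E s t := by
  simp only [IsPittWalk, mem_pathsTo hacyclic]
  constructor
  · rintro ⟨hs, hl, hsink⟩
    have hne : l ≠ [] := by
      rintro rfl
      simp at hs
    obtain ⟨t, ht⟩ := Option.isSome_iff_exists.1 (List.getLast?_isSome.2 hne)
    exact ⟨t, hsink t ht, hs, hl, ht⟩
  · rintro ⟨t, ht, hs, hl, hlast⟩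
    exact ⟨hs, hl, fun w hw => Option.some_inj.1 (hlast.symm.trans hw) ▸ ht⟩

end Pitt

open Classical in
theorem pitt_estimator_unbiased_general (V : Type*) [Fintype V]
    (E : V → V → Prop) (s : V)
    (hacyclic : ∀ v, ¬ Relation.TransGen E v v)
    (hsource : inDeg E s = 0)
    (huniqueSource : ∀ v, inDeg E v = 0 → v = s) :
    ∑' l : {l : List V // IsPittWalk E s l}, walkProb E l.1 * walkOutput E l.1
      = ((Finset.univ.filter (fun v => outDeg E v = 0)).card : ℝ) := by
  classical
  set sinks := univ.filter fun v => outDeg E v = 0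
  have hwalks : ∀ l, IsPittWalk E s l ↔ l ∈ sinks.biUnion (pathsTo E s) := fun l => by
    simp [isPittWalk_iff hacyclic, sinks]
  calc ∑' l : {l : List V // IsPittWalk E s l}, walkProb E l.1 * walkOutput E l.1
      = ∑' l : sinks.biUnion (pathsTo E s), walkProb E l.1 * walkOutput E l.1 :=
        (Equiv.subtypeEquivRight hwalks).tsum_eq fun l => walkProb E l.1 * walkOutput E l.1
    _ = ∑ t ∈ sinks, ∑ l ∈ pathsTo E s t, walkProb E l * walkOutput E l := by
        rw [Finset.tsum_subtype _ fun l => walkProb E l * walkOutput E l,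
          sum_biUnion (pairwiseDisjoint_pathsTo _ s)]
    _ = ∑ t ∈ sinks, 1 := sum_congr rfl fun t ht =>
        sum_walkProb_mul_walkOutput_pathsTo hacyclic hsource huniqueSource (mem_filter.1 ht).2
    _ = #sinks := by simp

open Classical in
/-- **Pitt's estimator is unbiased**: let `G = (V, E)` be a finite DAG with a
unique source `s` (in-degree `0`) from which every vertex is reachable.  For the
random walk from `s` that at each vertex moves to a uniformly random successor
until reaching a sink, the expected value of the output
`∏ᵢ dᵢ / eᵢ` (out-degree over in-degree, with the stated conventions) equals the
number of sinks of `G`. -/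
theorem pitt_estimator_unbiased (V : Type*) [Fintype V]
    (E : V → V → Prop) (s : V)
    (hacyclic : ∀ v, ¬ Relation.TransGen E v v)
    (hsource : inDeg E s = 0)
    (hreach : ∀ v, Relation.ReflTransGen E s v)
    (huniqueSource : ∀ v, inDeg E v = 0 → v = s) :
    ∑' l : {l : List V // IsPittWalk E s l}, walkProb E l.1 * walkOutput E l.1
      = ((Finset.univ.filter (fun v => outDeg E v = 0)).card : ℝ) :=
  pitt_estimator_unbiased_general V E s hacyclic hsource huniqueSource
end

section
/- For the random variable r on paths indexed by k ∈ {0,...,n}, where the path with index k occurs with probability 2^{-(k+1)} for k < n and 2^{-n} for k = n, and takes values r_0 = 2^{1−n}, r_k = 2^{2k−n} for 0 < k < n, and r_n = 2^{n−1}, the expected value of r is 1 and the variance equals (9/28)·2^n + (10/7)·2^{-2n} − 1. -/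
/-- The probability of the path with index `k ∈ {0, …, n}`:
`2^{-(k+1)}` for `k < n` and `2^{-n}` for `k = n`. -/
noncomputable def pathProb (n k : ℕ) : ℝ :=
  if k = n then (2 : ℝ) ^ (-(n : ℤ)) else (2 : ℝ) ^ (-((k : ℤ) + 1))

/-- The value of the estimator on the path with index `k`:
`r_0 = 2^{1-n}`, `r_k = 2^{2k-n}` for `0 < k < n`, and `r_n = 2^{n-1}`. -/
noncomputable def pathVal (n k : ℕ) : ℝ :=
  if k = 0 then (2 : ℝ) ^ ((1 : ℤ) - n)
  else if k = n then (2 : ℝ) ^ ((n : ℤ) - 1)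
  else (2 : ℝ) ^ (2 * (k : ℤ) - n)

private lemma myTwoNZ : (2 : ℝ) ≠ 0 := by norm_num

private lemma geom2 (N : ℕ) : ∑ i ∈ Finset.range N, (2:ℝ)^i = 2^N - 1 := by
  rw [geom_sum_eq (by norm_num)]; norm_num

private lemma geom8 (N : ℕ) : ∑ i ∈ Finset.range N, (8:ℝ)^i = (8^N - 1)/7 := by
  rw [geom_sum_eq (by norm_num)]; norm_num

private lemma probgeom (N : ℕ) :
    ∑ k ∈ Finset.range N, (2:ℝ)^(-((k:ℤ)+1)) = 1 - (2:ℝ)^(-(N:ℤ)) := by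
  induction N with
  | zero => simp
  | succ N ih =>
    rw [Finset.sum_range_succ, ih]
    have h : (2:ℝ)^(-((N:ℕ):ℤ)) = 2 * (2:ℝ)^(-((N:ℤ)+1)) := by
      rw [show (-((N:ℕ):ℤ)) = (-((N:ℤ)+1)) + 1 by ring, zpow_add_one₀ myTwoNZ]
      ring
    have h2 : (-(((N:ℕ)+1:ℕ)):ℤ) = -((N:ℤ)+1) := by push_cast; ring
    rw [h2, h]; ring

private lemma h8pow (i : ℕ) : (2:ℝ)^(((3*i : ℕ)):ℤ) = 8^i := by
  rw [zpow_natCast, pow_mul]; norm_num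

/-- **Mean and variance of Pitt's estimator on the `r + rr⋯r` program.**
For the random variable `r` on paths indexed by `k ∈ {0, …, n}` with the stated
probabilities and values, the expected value is `1` and the variance is
`(9/28)·2^n + (10/7)·2^{-2n} - 1`. -/
theorem pitt_estimator_mean_variance (n : ℕ) (hn : 2 ≤ n) :
    (∑ k ∈ Finset.range (n + 1), pathProb n k * pathVal n k) = 1 ∧
    (∑ k ∈ Finset.range (n + 1), pathProb n k * (pathVal n k - 1) ^ 2)
      = (9 / 28) * 2 ^ n + (10 / 7) * (2 : ℝ) ^ (-(2 * n : ℤ)) - 1 := by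
  obtain ⟨m, rfl⟩ : ∃ m, n = m + 2 := ⟨n - 2, by omega⟩
  have h2 : (2:ℝ) ≠ 0 := myTwoNZ
  have hp : (0:ℝ) < 2 ^ m := by positivity
  -- evaluate end terms
  have p0 : pathProb (m+2) 0 = (2:ℝ)^(-(1:ℤ)) := by
    rw [pathProb, if_neg (by omega)]; norm_num
  have v0 : pathVal (m+2) 0 = (2:ℝ)^((1:ℤ) - (m+2:ℕ)) := by
    rw [pathVal, if_pos rfl]
  have pn : pathProb (m+2) (m+2) = (2:ℝ)^(-((m+2:ℕ):ℤ)) := by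
    rw [pathProb, if_pos rfl]
  have vn : pathVal (m+2) (m+2) = (2:ℝ)^(((m+2:ℕ):ℤ) - 1) := by
    rw [pathVal, if_neg (by omega), if_pos rfl]
  -- powers as inverses of nat powers
  have eA : (2:ℝ)^(-(m:ℤ)-2) = ((2:ℝ)^(m+2))⁻¹ := by
    rw [show -(m:ℤ)-2 = -(((m+2:ℕ)):ℤ) by push_cast; ring, zpow_neg, zpow_natCast]
  have eB : (2:ℝ)^((1:ℤ) - (m+2:ℕ)) = ((2:ℝ)^(m+1))⁻¹ := by
    rw [show (1:ℤ) - (m+2:ℕ) = -(((m+1:ℕ)):ℤ) by push_cast; ring, zpow_neg, zpow_natCast]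
  have eC : (2:ℝ)^(-((m+2:ℕ):ℤ)) = ((2:ℝ)^(m+2))⁻¹ := by
    rw [zpow_neg, zpow_natCast]
  have eD : (2:ℝ)^(((m+2:ℕ):ℤ) - 1) = (2:ℝ)^(m+1) := by
    rw [show ((m+2:ℕ):ℤ) - 1 = (((m+1:ℕ)):ℤ) by push_cast; ring, zpow_natCast]
  have eE : (2:ℝ)^(-(2*m:ℤ)-2) = ((2:ℝ)^(2*m+2))⁻¹ := by
    rw [show -(2*m:ℤ)-2 = -(((2*m+2:ℕ)):ℤ) by push_cast; ring, zpow_neg, zpow_natCast]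
  have eF : (2:ℝ)^(-(2*((m:ℤ)+2))) = ((2:ℝ)^(2*m+4))⁻¹ := by
    rw [show -(2*((m:ℤ)+2)) = -(((2*m+4:ℕ)):ℤ) by push_cast; ring, zpow_neg, zpow_natCast]
  constructor
  · rw [show m + 2 + 1 = (m+2) + 1 from rfl, Finset.sum_range_succ,
      Finset.sum_range_succ']
    have key : ∀ i ∈ Finset.range (m+1),
        pathProb (m+2) (i+1) * pathVal (m+2) (i+1) = (2:ℝ)^(-(m:ℤ)-2) * 2^i := by
      intro i hi
      rw [Finset.mem_range] at hi
      rw [pathProb, pathVal, if_neg (by omega), if_neg (by omega), if_neg (by omega),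
        ← zpow_natCast (2:ℝ) i, ← zpow_add₀ h2, ← zpow_add₀ h2]
      congr 1; push_cast; ring
    rw [Finset.sum_congr rfl key, ← Finset.mul_sum, geom2, p0, v0, pn, vn,
      eA, eB, eC, eD]
    have : (2:ℝ)^(-(1:ℤ)) = 2⁻¹ := by norm_num
    rw [this]
    have h1 : ((2:ℝ)^(m+1)) ≠ 0 := by positivity
    have h22 : ((2:ℝ)^(m+2)) ≠ 0 := by positivity
    field_simp
    ring
  · have expand : ∀ k, pathProb (m+2) k * (pathVal (m+2) k - 1) ^ 2 =
        pathProb (m+2) k * pathVal (m+2) k ^ 2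
          - 2*(pathProb (m+2) k * pathVal (m+2) k) + pathProb (m+2) k := by
      intro k; ring
    simp_rw [expand]
    rw [Finset.sum_add_distrib, Finset.sum_sub_distrib, ← Finset.mul_sum]
    -- second moment
    have sq : (∑ k ∈ Finset.range (m + 2 + 1),
        pathProb (m+2) k * pathVal (m+2) k ^ 2)
        = ((2:ℝ)^(2*m+2))⁻¹ * ((8^(m+1) - 1)/7) + ((2:ℝ)^(m+1))⁻¹^2 * 2⁻¹
          + ((2:ℝ)^(m+2))⁻¹ * ((2:ℝ)^(m+1))^2 := by
      rw [Finset.sum_range_succ, Finset.sum_range_succ']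
      have key : ∀ i ∈ Finset.range (m+1),
          pathProb (m+2) (i+1) * pathVal (m+2) (i+1) ^ 2
            = (2:ℝ)^(-(2*m:ℤ)-2) * 8^i := by
        intro i hi
        rw [Finset.mem_range] at hi
        rw [pathProb, pathVal, if_neg (by omega), if_neg (by omega), if_neg (by omega),
          ← h8pow, ← zpow_natCast ((2:ℝ)^(2 * ((i:ℕ)+1:ℕ) - ((m:ℕ)+2:ℕ) : ℤ)) 2,
          ← zpow_mul, ← zpow_add₀ h2, ← zpow_add₀ h2]
        congr 1; push_cast; ring
      rw [Finset.sum_congr rfl key, ← Finset.mul_sum, geom8, p0, v0, pn, vn,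
        eE, eB, eC, eD]
      have : (2:ℝ)^(-(1:ℤ)) = 2⁻¹ := by norm_num
      rw [this]
      ring
    -- mean part as before
    have mean : (∑ k ∈ Finset.range (m + 2 + 1),
        pathProb (m+2) k * pathVal (m+2) k) = 1 := by
      rw [Finset.sum_range_succ, Finset.sum_range_succ']
      have key : ∀ i ∈ Finset.range (m+1),
          pathProb (m+2) (i+1) * pathVal (m+2) (i+1) = (2:ℝ)^(-(m:ℤ)-2) * 2^i := by
        intro i hi
        rw [Finset.mem_range] at hi
        rw [pathProb, pathVal, if_neg (by omega), if_neg (by omega), if_neg (by omega),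
          ← zpow_natCast (2:ℝ) i, ← zpow_add₀ h2, ← zpow_add₀ h2]
        congr 1; push_cast; ring
      rw [Finset.sum_congr rfl key, ← Finset.mul_sum, geom2, p0, v0, pn, vn,
        eA, eB, eC, eD]
      have : (2:ℝ)^(-(1:ℤ)) = 2⁻¹ := by norm_num
      rw [this]
      have h1 : ((2:ℝ)^(m+1)) ≠ 0 := by positivity
      have h22 : ((2:ℝ)^(m+2)) ≠ 0 := by positivity
      field_simp
      ring
    -- total probability
    have prob : (∑ k ∈ Finset.range (m + 2 + 1), pathProb (m+2) k) = 1 := by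
      rw [Finset.sum_range_succ, pn, eC]
      have key : ∀ k ∈ Finset.range (m+2),
          pathProb (m+2) k = (2:ℝ)^(-((k:ℤ)+1)) := by
        intro k hk
        rw [Finset.mem_range] at hk
        rw [pathProb, if_neg (by omega)]
      rw [Finset.sum_congr rfl key, probgeom, eC]
      ring
    rw [sq, mean, prob]
    rw [show (-(2 * ((m:ℕ)+2:ℕ) : ℤ)) = -(2*((m:ℤ)+2)) by push_cast; ring, eF]
    have h1 : ((2:ℝ)^(m+1)) ≠ 0 := by positivity
    have h22 : ((2:ℝ)^(m+2)) ≠ 0 := by positivity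
    have h3 : ((2:ℝ)^(2*m+2)) ≠ 0 := by positivity
    have h4 : ((2:ℝ)^(2*m+4)) ≠ 0 := by positivity
    have h8m : (8:ℝ)^(m+1) = 8 * ((2:ℝ)^m)^3 := by
      rw [show (8:ℝ) = 2^3 by norm_num, ← pow_mul, ← pow_mul]; ring_nf
    rw [h8m]
    have e1 : (2:ℝ)^(2*m+2) = 4 * ((2:ℝ)^m)^2 := by rw [← pow_mul]; ring
    have e2 : (2:ℝ)^(2*m+4) = 16 * ((2:ℝ)^m)^2 := by rw [← pow_mul]; ring
    have e3 : (2:ℝ)^(m+1) = 2 * (2:ℝ)^m := by ring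
    have e4 : (2:ℝ)^(m+2) = 4 * (2:ℝ)^m := by ring
    rw [e1, e2, e3, e4]
    have hm : ((2:ℝ)^m) ≠ 0 := ne_of_gt hp
    field_simp
    ring
end

section
/- Stochastic enumeration with budget B ≥ 1 on a finite rooted tree T is an unbiased estimator of the number of leaves of T: the expected value of the output of Algorithm S equals the number of leaves. -/
namespace RTree

/-- The depth (height) of a finite rooted tree. -/
def depth : RTree → ℕ
  | node [] => 0
  | node (c :: cs) => 1 + ((c :: cs).attach.map (fun x => depth x.1)).foldr max 0
decreasing_by
  all_goals
    have h := List.sizeOf_lt_of_mem x.2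
    simp only [List.cons.sizeOf_spec, RTree.node.sizeOf_spec] at h ⊢
    omega

/-- The number of leaves contained in a population `H` of nodes
(nodes are identified with the subtrees rooted at them). -/
def leafCnt (H : Multiset RTree) : ℕ :=
  (H.map (fun t => if t.children.isEmpty then 1 else 0)).sum

open Classical in
/-- **Algorithm S (stochastic enumeration)** with budget `B`, as a probability
distribution over outputs.  Given the current weight `w` and population `H`
(a multiset of nodes of the tree), it adds the term `w·c(H)/|H|` and continues
with the population `S(H)` of all children of nodes of `H`: if `|S(H)| ≤ B`
the whole population is kept, and otherwise a uniformly random `B`-element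
subset of `S(H)` is kept; the weight is multiplied by `|S(H)|/|H|`.  The
recursion stops when `S(H) = ∅` (the `fuel` parameter bounds the number of
steps; any `fuel ≥ depth + 2` suffices). -/
noncomputable def seFull (B : ℕ) : ℕ → ℝ → Multiset RTree → PMF ℝ
  | 0, _, _ => PMF.pure 0
  | fuel + 1, w, H =>
      if H = 0 then PMF.pure 0
      else
        let S : Multiset RTree := H.bind (fun t => (t.children : Multiset RTree))
        let term : ℝ := w * (leafCnt H : ℝ) / (Multiset.card H : ℝ)
        let w' : ℝ := w * (Multiset.card S : ℝ) / (Multiset.card H : ℝ)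
        if S = 0 then PMF.pure term
        else if hcard : Multiset.card S ≤ B then
          (seFull B fuel w' S).map (fun x => term + x)
        else
          (PMF.ofMultiset (Multiset.powersetCard B S)
            (by
              intro h0
              have hc : (Multiset.card S).choose B = 0 := by
                rw [← Multiset.card_powersetCard, h0]
                simp
              have hpos := Nat.choose_pos (le_of_lt (lt_of_not_ge hcard))
              omega)).bind (fun H' =>
            (seFull B fuel w' H').map (fun x => term + x))

end RTree

namespace Multiset

variable {α M : Type*}

theorem sum_map_sum_powersetCard_succ [AddCommMonoid M] (f : α → M) (s : Multiset α) (k : ℕ) :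
    ((powersetCard (k + 1) s).map fun t => (t.map f).sum).sum
      = (card s - 1).choose k • (s.map f).sum := by
  induction s using Multiset.induction_on generalizing k with
  | empty => simp [powersetCard_zero_right]
  | cons a s ih =>
    have hcons : ((powersetCard k s).map fun t => ((a ::ₘ t).map f).sum).sum
        = (card s).choose k • f a + ((powersetCard k s).map fun t => (t.map f).sum).sum := by
      simp [sum_map_add]
    rw [powersetCard_cons, map_add, sum_add, map_map, Function.comp_def, hcons, ih, card_cons,
      Nat.add_sub_cancel, map_cons, sum_cons, nsmul_add]
    cases k with
    | zero => simp [add_comm]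
    | succ j =>
      rw [ih]
      rcases eq_or_ne s 0 with rfl | hs
      · simp
      · obtain ⟨n, hn⟩ := Nat.exists_eq_add_one.2 (card_pos.2 hs)
        rw [hn, Nat.add_sub_cancel, Nat.choose_succ_succ']
        simp only [add_nsmul]
        abel

theorem sum_map_sum_div_card_powersetCard (f : α → ℝ) {s : Multiset α} {k : ℕ} (hk : 0 < k)
    (hks : k ≤ card s) :
    ((powersetCard k s).map fun t => (t.map f).sum / card t).sum / (card s).choose k
      = (s.map f).sum / card s := by
  obtain ⟨j, rfl⟩ := Nat.exists_eq_add_one.2 hk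
  obtain ⟨n, hn⟩ := Nat.exists_eq_add_one.2 (hk.trans_le hks)
  have hcard : ((powersetCard (j + 1) s).map fun t => (t.map f).sum / card t)
      = (powersetCard (j + 1) s).map fun t => (t.map f).sum / ((j + 1 : ℕ) : ℝ) :=
    map_congr rfl fun t ht => by rw [(mem_powersetCard.1 ht).2]
  have hchoose : ((n + 1 : ℕ) : ℝ) * n.choose j = (n + 1).choose (j + 1) * (j + 1 : ℕ) := by
    exact_mod_cast Nat.add_one_mul_choose_eq n j
  have hpos : ((n + 1).choose (j + 1) : ℝ) ≠ 0 := by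
    exact_mod_cast (Nat.choose_pos (hn ▸ hks)).ne'
  rw [hcard, sum_map_div, sum_map_sum_powersetCard_succ, hn, Nat.add_sub_cancel, nsmul_eq_mul]
  field_simp
  linear_combination (s.map f).sum * hchoose

end Multiset

open MeasureTheory

namespace PMF

variable {α : Type*}

def HasMean (p : PMF ℝ) (m : ℝ) : Prop :=
  Integrable (fun x => x) p.toMeasure ∧ ∫ x, x ∂p.toMeasure = m

theorem hasMean_pure (a : ℝ) : (pure a).HasMean a := by
  rw [HasMean, toMeasure_pure]
  exact ⟨integrable_dirac (by simp), integral_dirac _ a⟩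

theorem HasMean.map_const_add {p : PMF ℝ} {m : ℝ} (h : p.HasMean m) (c : ℝ) :
    (p.map (c + ·)).HasMean (c + m) := by
  have hc : Measurable (c + · : ℝ → ℝ) := by fun_prop
  rw [HasMean, ← toMeasure_map _ p hc, integrable_map_measure (by fun_prop) hc.aemeasurable,
    integral_map hc.aemeasurable (by fun_prop)]
  refine ⟨(integrable_const c).add h.1, ?_⟩
  rw [integral_add (integrable_const c) h.1, integral_const, h.2]
  simp

theorem toMeasure_bind_eq_sum (p : PMF α) (q : α → PMF ℝ) {s : Finset α} (hs : p.support ⊆ s) :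
    (p.bind q).toMeasure = ∑ a ∈ s, p a • (q a).toMeasure := by
  ext E hE
  rw [toMeasure_bind_apply p q E hE, Measure.finsetSum_apply,
    tsum_eq_sum (s := s) fun a ha => by simp [apply_eq_zero_iff p a |>.2 fun h => ha (hs h)]]
  simp

theorem HasMean.bind (p : PMF α) {q : α → PMF ℝ} {s : Finset α} (hs : p.support ⊆ s) {m : α → ℝ}
    (h : ∀ a ∈ s, (q a).HasMean (m a)) :
    (p.bind q).HasMean (∑ a ∈ s, (p a).toReal * m a) := by
  have hint : ∀ a ∈ s, Integrable (fun x => x) (p a • (q a).toMeasure) :=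
    fun a ha => (h a ha).1.smul_measure (apply_ne_top p a)
  rw [HasMean, toMeasure_bind_eq_sum p q hs, integrable_finsetSum_measure,
    integral_finsetSum_measure hint]
  refine ⟨hint, Finset.sum_congr rfl fun a ha => ?_⟩
  rw [integral_smul_measure, (h a ha).2, smul_eq_mul]

theorem hasMean_ofMultiset_bind (s : Multiset α) (hs : s ≠ 0) {q : α → PMF ℝ} {m : α → ℝ}
    (h : ∀ a ∈ s, (q a).HasMean (m a)) :
    ((ofMultiset s hs).bind q).HasMean ((s.map m).sum / Multiset.card s) := by
  classical
  convert HasMean.bind _ (support_ofMultiset hs).le fun a ha => h a (Multiset.mem_toFinset.1 ha)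
  rw [Finset.sum_multiset_map_count s m, Finset.sum_div]
  refine Finset.sum_congr rfl fun a _ => ?_
  simp [ENNReal.toReal_div, div_mul_eq_mul_div]

end PMF

namespace RTree

theorem depth_lt_of_mem_children {t c : RTree} (h : c ∈ t.children) : depth c < depth t := by
  obtain ⟨_ | ⟨a, cs⟩⟩ := t
  · simp [children] at h
  · simp only [children] at h
    have := List.le_max_of_le' 0 (List.mem_map_of_mem (f := depth) h) le_rfl
    rw [depth, List.attach_map_val]
    omega

theorem leaves_eq_ite_add_sum (t : RTree) :
    leaves t = (if t.children.isEmpty then 1 else 0) + (t.children.map leaves).sum := by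
  obtain ⟨_ | _⟩ := t <;> simp [leaves, children]

def offspring (H : Multiset RTree) : Multiset RTree := H.bind fun t => t.children

def totalLeaves (H : Multiset RTree) : ℕ := (H.map leaves).sum

theorem totalLeaves_eq_leafCnt_add (H : Multiset RTree) :
    totalLeaves H = leafCnt H + totalLeaves (offspring H) := by
  rw [totalLeaves, totalLeaves, leafCnt, offspring, Multiset.map_bind, Multiset.sum_bind,
    ← Multiset.sum_map_add]
  exact congrArg _ (Multiset.map_congr rfl fun t _ => by simpa using leaves_eq_ite_add_sum t)

theorem hasMean_bind_ofMultiset_powersetCard {S : Multiset RTree} {B : ℕ} (hB : 0 < B)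
    (hBS : B ≤ Multiset.card S) (hne : Multiset.powersetCard B S ≠ 0)
    {q : Multiset RTree → PMF ℝ} {c : ℝ}
    (h : ∀ H ∈ Multiset.powersetCard B S, (q H).HasMean (c * (totalLeaves H / Multiset.card H))) :
    ((PMF.ofMultiset _ hne).bind q).HasMean (c * (totalLeaves S / Multiset.card S)) := by
  have key := PMF.hasMean_ofMultiset_bind _ hne h
  rw [Multiset.sum_map_mul_left, mul_div_assoc, Multiset.card_powersetCard] at key
  simp only [totalLeaves, Nat.cast_multiset_sum, Multiset.map_map, Function.comp_def] at key ⊢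
  rwa [Multiset.sum_map_sum_div_card_powersetCard _ hB hBS] at key

theorem hasMean_seFull {B : ℕ} (hB : 1 ≤ B) (fuel : ℕ) (w : ℝ) (H : Multiset RTree)
    (hH : ∀ x ∈ H, depth x < fuel) :
    (seFull B fuel w H).HasMean (w * (totalLeaves H / Multiset.card H)) := by
  induction fuel generalizing w H with
  | zero =>
    obtain rfl : H = 0 := Multiset.eq_zero_of_forall_notMem fun x hx => Nat.not_lt_zero _ (hH x hx)
    simpa [seFull, totalLeaves] using PMF.hasMean_pure 0
  | succ fuel ih =>
    rcases eq_or_ne H 0 with rfl | hH0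
    · simpa [seFull, totalLeaves] using PMF.hasMean_pure 0
    have hdepth : ∀ x ∈ offspring H, depth x < fuel := fun x hx => by
      obtain ⟨t, ht, hxt⟩ := Multiset.mem_bind.1 hx
      exact Nat.lt_of_lt_of_le (depth_lt_of_mem_children hxt) (Nat.lt_succ_iff.1 (hH t ht))
    have hcardH : (Multiset.card H : ℝ) ≠ 0 := by simpa using hH0
    have hmean (hS0 : offspring H ≠ 0) :
        w * leafCnt H / Multiset.card H + w * Multiset.card (offspring H) / Multiset.card H *
          (totalLeaves (offspring H) / Multiset.card (offspring H))
          = w * (totalLeaves H / Multiset.card H) := by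
      have : (Multiset.card (offspring H) : ℝ) ≠ 0 := by simpa using hS0
      rw [totalLeaves_eq_leafCnt_add H]
      field_simp
      push_cast
      ring
    rw [seFull, if_neg hH0]
    simp only [← offspring.eq_1]
    split_ifs with hS0 hcard
    · have hleaf : totalLeaves H = leafCnt H := by
        rw [totalLeaves_eq_leafCnt_add, offspring, hS0]
        rfl
      rw [hleaf, ← mul_div_assoc]
      exact PMF.hasMean_pure _
    · rw [← hmean hS0]
      exact (ih _ _ hdepth).map_const_add _
    · rw [← PMF.map_bind, ← hmean hS0]
      refine PMF.HasMean.map_const_add ?_ _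
      exact hasMean_bind_ofMultiset_powersetCard hB (not_le.1 hcard).le _ fun H' hH' =>
        ih _ H' fun x hx => hdepth x (Multiset.mem_of_le (Multiset.mem_powersetCard.1 hH').1 hx)

end RTree

open RTree in
/-- **Stochastic enumeration is unbiased**: for every budget `B ≥ 1` and every
finite rooted tree `t`, the expected value of the output of Algorithm S
(started with weight `1` from the singleton population `{root}`) equals the
number of leaves of `t`. -/
theorem stochastic_enumeration_unbiased (B : ℕ) (hB : 1 ≤ B) (t : RTree)
    (fuel : ℕ) (hfuel : depth t + 2 ≤ fuel) :
    ∫ x, x ∂((seFull B fuel 1 ({t} : Multiset RTree)).toMeasure)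
      = (leaves t : ℝ) := by
  have h := hasMean_seFull hB fuel 1 {t} fun x hx => by
    rw [Multiset.mem_singleton.1 hx]
    omega
  simpa [totalLeaves] using h.2
end

section
/- With the inorder numbering of a complete b-ary tree, if u and v are nodes whose assigned number sets both intersect an interval [a,b] of integers, then the assigned number set of the least common ancestor of u and v also intersects [a,b]. Consequently, for every interval I there is a unique node w_I such that w_I's number set meets I and every node whose number set meets I lies in the subtree rooted at w_I. -/
/-- The inorder-numbering traversal of the complete `b`-ary tree of height `h`,
with nodes identified with their positions (lists of child indices from the
root).  The `n`-th element of `inord b h []` is the `(node, slot)` pair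
receiving number `n + 1`. -/
def inord (b : ℕ) : ℕ → List ℕ → List (List ℕ × ℕ)
  | 0, pos => [(pos, 0)]
  | h + 1, pos => (List.range b).flatMap (fun i => inord b h (pos ++ [i]) ++ [(pos, i)])

/-- `assignedTo b h n u` means that number `n` (1-based) is assigned to the
node `u` by the inorder numbering of the complete `b`-ary tree of height `h`. -/
def assignedTo (b h n : ℕ) (u : List ℕ) : Prop :=
  ∃ s, (inord b h [])[n - 1]? = some (u, s)

/-- The longest common prefix of two positions: the least common ancestor in
the tree of positions. -/
def lcp : List ℕ → List ℕ → List ℕ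
  | x :: xs, y :: ys => if x = y then x :: lcp xs ys else []
  | _, _ => []

/-!
The nodes of the subtree at `p` are numbered in one contiguous block, made of a run for each
child subtree, each run being followed by a number of `p` itself. Two numbers lying in runs of
different children of `p` (or one of them belonging to `p`) have `p` as least common ancestor,
and a number of `p` lies between them; two numbers in the same run are handled by recursion.
So every interval of the numbering is closed under `lcp`; for its shortest node `w` and any node
`u` in it, `lcp w u` is then a node of the interval no longer than `w`, hence equal to `w`.
-/

open List

theorem lcp_comm : ∀ u v : List ℕ, lcp u v = lcp v u
  | [], [] | [], _ :: _ | _ :: _, [] => rfl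
  | x :: u, y :: v => by
    by_cases h : x = y
    · subst h; simp [lcp, lcp_comm u v]
    · simp [lcp, h, Ne.symm h]

theorem lcp_prefix_left : ∀ u v : List ℕ, lcp u v <+: u
  | [], [] | [], _ :: _ | _ :: _, [] => by simp [lcp]
  | x :: u, y :: v => by
    by_cases h : x = y
    · subst h; simpa [lcp] using lcp_prefix_left u v
    · simp [lcp, h]

theorem lcp_prefix_right (u v : List ℕ) : lcp u v <+: v :=
  lcp_comm u v ▸ lcp_prefix_left v u

theorem lcp_eq_left_of_prefix {u v : List ℕ} (h : u <+: v) : lcp u v = u := by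
  obtain ⟨t, rfl⟩ := h
  induction u with
  | nil => cases t <;> rfl
  | cons x u ih => simp [lcp, ih]

theorem lcp_append_cons_of_ne {i j : ℕ} (h : i ≠ j) (p s t : List ℕ) :
    lcp (p ++ i :: s) (p ++ j :: t) = p := by
  induction p with
  | nil => simp [lcp, h]
  | cons x p ih => simp [lcp, ih]

theorem lcp_eq_of_children {p u v : List ℕ} {i j : ℕ} (hij : i ≠ j)
    (hu : u = p ∨ p ++ [i] <+: u) (hv : v = p ∨ p ++ [j] <+: v) : lcp u v = p := by
  rcases hu with rfl | ⟨s, rfl⟩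
  · rcases hv with rfl | hv
    exacts [lcp_eq_left_of_prefix prefix_rfl,
      lcp_eq_left_of_prefix ((prefix_append _ _).trans hv)]
  rcases hv with rfl | ⟨t, rfl⟩
  · rw [lcp_comm, lcp_eq_left_of_prefix (by simp)]
  · simpa using lcp_append_cons_of_ne hij p s t

def LcpIntervalClosed (L : List (List ℕ)) : Prop :=
  ∀ M, M <:+: L → ∀ u ∈ M, ∀ v ∈ M, lcp u v ∈ M

namespace LcpIntervalClosed

theorem nil : LcpIntervalClosed [] := by
  intro M hM u hu
  simp [eq_nil_of_infix_nil hM] at hu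

theorem singleton (p : List ℕ) : LcpIntervalClosed [p] := by
  intro M hM u hu v hv
  obtain rfl := mem_singleton.1 (hM.subset hu)
  obtain rfl := mem_singleton.1 (hM.subset hv)
  rwa [lcp_eq_left_of_prefix prefix_rfl]

theorem append {X Y : List (List ℕ)} {p : List ℕ} (hX : LcpIntervalClosed X)
    (hY : LcpIntervalClosed Y) (hp : X.getLast? = some p ∨ Y.head? = some p)
    (hXY : ∀ u ∈ X, ∀ v ∈ Y, lcp u v = p) : LcpIntervalClosed (X ++ Y) := by
  intro M hM
  rcases infix_append_iff_ne_nil.1 hM with hM | hM | ⟨M₁, M₂, hM₁, hM₂, rfl, hs, hpre⟩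
  · exact hX M hM
  · exact hY M hM
  -- a run straddling the junction contains the last entry of `X` and the first one of `Y`
  have hpM : p ∈ M₁ ++ M₂ := by
    rcases hp with hp | hp
    · rw [getLast?_eq_some_getLast (hs.ne_nil hM₁), Option.some_inj, ← hs.getLast hM₁] at hp
      exact mem_append_left _ (hp ▸ getLast_mem hM₁)
    · rw [head?_eq_some_head (hpre.ne_nil hM₂), Option.some_inj, ← hpre.head hM₂] at hp
      exact mem_append_right _ (hp ▸ head_mem hM₂)
  have hcross : ∀ u ∈ M₁, ∀ v ∈ M₂, lcp u v = p := fun u hu v hv =>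
    hXY u (hs.subset hu) v (hpre.subset hv)
  intro u hu v hv
  rcases mem_append.1 hu with hu | hu <;> rcases mem_append.1 hv with hv | hv
  · exact mem_append_left _ (hX M₁ hs.isInfix u hu v hv)
  · rwa [hcross u hu v hv]
  · rwa [lcp_comm, hcross v hv u hu]
  · exact mem_append_right _ (hY M₂ hpre.isInfix u hu v hv)

end LcpIntervalClosed

theorem exists_unique_prefix_of_lcp_mem {M : List (List ℕ)} (hne : M ≠ [])
    (hM : ∀ u ∈ M, ∀ v ∈ M, lcp u v ∈ M) : ∃! w, w ∈ M ∧ ∀ u ∈ M, w <+: u := by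
  classical
  obtain ⟨w, hw, hmin⟩ :=
    M.toFinset.exists_min_image length (by simpa [Finset.nonempty_iff_ne_empty] using hne)
  simp only [mem_toFinset] at hw hmin
  have hwu : ∀ u ∈ M, w <+: u := fun u hu => by
    rw [← (lcp_prefix_left w u).eq_of_length_le (hmin _ (hM w hw u hu))]
    exact lcp_prefix_right w u
  exact ⟨w, ⟨hw, hwu⟩, fun w' ⟨hw', hw'u⟩ => antisymm (hw'u w hw) (hwu w' hw')⟩

section inordNodes

variable {b : ℕ}

def inordNodes (b h : ℕ) (pos : List ℕ) : List (List ℕ) :=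
  (inord b h pos).map Prod.fst

theorem inordNodes_succ (h : ℕ) (pos : List ℕ) :
    inordNodes b (h + 1) pos =
      (range b).flatMap fun i => inordNodes b h (pos ++ [i]) ++ [pos] := by
  simp [inordNodes, inord, map_flatMap]

theorem prefix_of_mem_inordNodes :
    ∀ {h : ℕ} {pos x : List ℕ}, x ∈ inordNodes b h pos → pos <+: x
  | 0, pos, x, hx => by simp_all [inordNodes, inord]
  | h + 1, pos, x, hx => by
    rw [inordNodes_succ] at hx
    obtain ⟨i, -, hx⟩ := mem_flatMap.1 hx
    rcases mem_append.1 hx with hx | hx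
    · exact (prefix_append _ _).trans (prefix_of_mem_inordNodes hx)
    · rw [mem_singleton.1 hx]

theorem eq_or_prefix_of_mem_block {h i : ℕ} {pos x : List ℕ}
    (hx : x ∈ inordNodes b h (pos ++ [i]) ++ [pos]) : x = pos ∨ pos ++ [i] <+: x := by
  rcases mem_append.1 hx with hx | hx
  exacts [Or.inr (prefix_of_mem_inordNodes hx), Or.inl (mem_singleton.1 hx)]

theorem lcpIntervalClosed_block {h i : ℕ} {pos : List ℕ}
    (hsub : LcpIntervalClosed (inordNodes b h (pos ++ [i]))) :
    LcpIntervalClosed (inordNodes b h (pos ++ [i]) ++ [pos]) :=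
  hsub.append (.singleton pos) (Or.inr rfl) fun u hu v hv => by
    rw [mem_singleton.1 hv, lcp_comm]
    exact lcp_eq_left_of_prefix ((prefix_append _ _).trans (prefix_of_mem_inordNodes hu))

theorem lcpIntervalClosed_flatMap_range' {h : ℕ} {pos : List ℕ}
    (hsub : ∀ i, LcpIntervalClosed (inordNodes b h (pos ++ [i]))) :
    ∀ k m, LcpIntervalClosed
      ((range' k m).flatMap fun i => inordNodes b h (pos ++ [i]) ++ [pos])
  | _, 0 => .nil
  | k, m + 1 => by
    rw [range'_succ, flatMap_cons]
    refine (lcpIntervalClosed_block (hsub k)).append (p := pos)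
      (lcpIntervalClosed_flatMap_range' hsub (k + 1) m) (Or.inl (by simp)) fun u hu v hv => ?_
    obtain ⟨j, hj, hv⟩ := mem_flatMap.1 hv
    exact lcp_eq_of_children (by rw [mem_range'_1] at hj; omega) (eq_or_prefix_of_mem_block hu)
      (eq_or_prefix_of_mem_block hv)

theorem lcpIntervalClosed_inordNodes : ∀ (h : ℕ) (pos : List ℕ),
    LcpIntervalClosed (inordNodes b h pos)
  | 0, pos => .singleton pos
  | h + 1, pos => by
    rw [inordNodes_succ, range_eq_range']
    exact lcpIntervalClosed_flatMap_range' (fun _ => lcpIntervalClosed_inordNodes h _) 0 b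

theorem exists_assignedTo_iff_mem {h a c : ℕ} {u : List ℕ} (ha : 1 ≤ a) :
    (∃ n, a ≤ n ∧ n ≤ c ∧ assignedTo b h n u) ↔
      u ∈ ((inordNodes b h []).drop (a - 1)).take (c + 1 - a) := by
  simp only [assignedTo, mem_iff_getElem?, getElem?_take, getElem?_drop, inordNodes,
    getElem?_map]
  constructor
  · rintro ⟨n, han, hnc, s, hn⟩
    refine ⟨n - a, ?_⟩
    rw [if_pos (by omega), show a - 1 + (n - a) = n - 1 by omega, hn, Option.map_some]
  · rintro ⟨k, hk⟩
    split_ifs at hk with hkc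
    obtain ⟨⟨v, s⟩, hvs, rfl⟩ := Option.map_eq_some_iff.1 hk
    exact ⟨a + k, by omega, by omega, s, by rwa [show a + k - 1 = a - 1 + k by omega]⟩

end inordNodes

theorem inorder_interval_lca_general (b h a c : ℕ)
    (ha : 1 ≤ a) (hac : a ≤ c) (hc : c ≤ (inord b h []).length) :
    (∀ u v : List ℕ,
      (∃ n, a ≤ n ∧ n ≤ c ∧ assignedTo b h n u) →
      (∃ n, a ≤ n ∧ n ≤ c ∧ assignedTo b h n v) →
      ∃ n, a ≤ n ∧ n ≤ c ∧ assignedTo b h n (lcp u v)) ∧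
    (∃! w : List ℕ,
      (∃ n, a ≤ n ∧ n ≤ c ∧ assignedTo b h n w) ∧
      ∀ u : List ℕ, (∃ n, a ≤ n ∧ n ≤ c ∧ assignedTo b h n u) → w <+: u) := by
  simp only [exists_assignedTo_iff_mem ha]
  set M := ((inordNodes b h []).drop (a - 1)).take (c + 1 - a)
  have hclosed : ∀ u ∈ M, ∀ v ∈ M, lcp u v ∈ M :=
    lcpIntervalClosed_inordNodes h [] M
      ((take_prefix _ _).isInfix.trans (drop_suffix _ _).isInfix)
  have hne : M ≠ [] := by
    simp only [M, ne_eq, ← length_eq_zero_iff, length_take, length_drop, inordNodes, length_map]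
    omega
  exact ⟨fun u v hu hv => hclosed u hu v hv, exists_unique_prefix_of_lcp_mem hne hclosed⟩

/-- **Interval/LCA property of the inorder numbering.**  In the complete
`b`-ary tree of height `h` with its inorder numbering, if the number sets of
two nodes `u` and `v` both meet an interval `[a, c] ⊆ [1, N]`, then so does the
number set of their least common ancestor (longest common prefix).
Consequently, for every such interval `I` there is a unique node `w_I` whose
number set meets `I` and such that every node whose number set meets `I` lies
in the subtree rooted at `w_I` (i.e. has `w_I` as a prefix). -/
theorem inorder_interval_lca (b h a c : ℕ) (hb : 2 ≤ b)
    (ha : 1 ≤ a) (hac : a ≤ c) (hc : c ≤ (inord b h []).length) :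
    (∀ u v : List ℕ,
      (∃ n, a ≤ n ∧ n ≤ c ∧ assignedTo b h n u) →
      (∃ n, a ≤ n ∧ n ≤ c ∧ assignedTo b h n v) →
      ∃ n, a ≤ n ∧ n ≤ c ∧ assignedTo b h n (lcp u v)) ∧
    (∃! w : List ℕ,
      (∃ n, a ≤ n ∧ n ≤ c ∧ assignedTo b h n w) ∧
      ∀ u : List ℕ, (∃ n, a ≤ n ∧ n ≤ c ∧ assignedTo b h n u) → w <+: u) :=
  inorder_interval_lca_general b h a c ha hac hc
end

section
/- Let T be a finite rooted tree with nonnegative real weights on its nodes. The weighted Knuth estimator — follow a uniformly random root-to-leaf path, and output Σ_j (∏_{l<j} d_l)·w(n_j) summing over visited nodes n_j with weights w and branching factors d_l — is an unbiased estimator of the total weight Σ_{v ∈ T} w(v). -/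
/-- A finite rooted tree with a real weight at every node. -/
inductive WTree where
  | node : ℝ → List WTree → WTree

namespace WTree

/-- The weight at the root. -/
def weight : WTree → ℝ
  | node w _ => w

/-- The children of the root. -/
def children : WTree → List WTree
  | node _ cs => cs

/-- The total weight of the tree: the sum of the weights of all nodes. -/
noncomputable def totalWeight : WTree → ℝ
  | node w cs => w + (cs.attach.map (fun x => totalWeight x.1)).sum
decreasing_by
  all_goals
    have h := List.sizeOf_lt_of_mem x.2
    simp only [WTree.node.sizeOf_spec] at h ⊢
    omega

/-- All weights of the tree are nonnegative. -/
def allNonneg : WTree → Prop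
  | node w cs => 0 ≤ w ∧ ∀ x ∈ cs.attach, allNonneg x.1
decreasing_by
  all_goals
    have h := List.sizeOf_lt_of_mem x.2
    simp only [WTree.node.sizeOf_spec] at h ⊢
    omega

/-- All root-to-leaf random walks of the weighted Knuth estimator, as a list of
(probability, output) pairs: the walk descends from the root choosing a
uniformly random child at each step; visiting the nodes `n₁, n₂, …` with
branching factors `d₁, d₂, …`, the output is `Σ_j (∏_{l<j} d_l) · w(n_j)`. -/
noncomputable def wwalks : WTree → List (ℝ × ℝ)
  | node w [] => [(1, w)]
  | node w (c :: cs) =>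
      (c :: cs).attach.flatMap (fun x =>
        (wwalks x.1).map (fun pv =>
          (pv.1 / ((c :: cs).length : ℝ),
            w + ((c :: cs).length : ℝ) * pv.2)))
decreasing_by
  all_goals
    have h := List.sizeOf_lt_of_mem x.2
    simp only [List.cons.sizeOf_spec, WTree.node.sizeOf_spec] at h ⊢
    omega

end WTree

/-!
Induction on the tree. At a root of weight `w` with `n ≥ 1` children, a walk enters each child
with probability `1 / n` and then outputs `w + n · (its output in that child)`. Since the walk
probabilities of every subtree sum to `1`, the expected output is
`Σ_c (1 / n) (w + n E_c) = w + Σ_c E_c`, which by induction is the total weight.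
-/

def probMass (L : List (ℝ × ℝ)) : ℝ := (L.map Prod.fst).sum

def expectation (L : List (ℝ × ℝ)) : ℝ := (L.map fun pv => pv.1 * pv.2).sum

theorem probMass_flatMap {α : Type*} (l : List α) (f : α → List (ℝ × ℝ)) :
    probMass (l.flatMap f) = (l.map fun a => probMass (f a)).sum := by
  induction l with
  | nil => simp [probMass]
  | cons a l ih => simp_all [probMass]

theorem expectation_flatMap {α : Type*} (l : List α) (f : α → List (ℝ × ℝ)) :
    expectation (l.flatMap f) = (l.map fun a => expectation (f a)).sum := by
  induction l with
  | nil => simp [expectation]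
  | cons a l ih => simp_all [expectation]

noncomputable def liftWalk (n w : ℝ) (pv : ℝ × ℝ) : ℝ × ℝ := (pv.1 / n, w + n * pv.2)

theorem probMass_map_liftWalk (L : List (ℝ × ℝ)) (n w : ℝ) :
    probMass (L.map (liftWalk n w)) = probMass L / n := by
  simp only [probMass, List.map_map, Function.comp_def, liftWalk, div_eq_mul_inv,
    List.sum_map_mul_right]

theorem expectation_map_liftWalk (L : List (ℝ × ℝ)) {n : ℝ} (hn : n ≠ 0) (w : ℝ) :
    expectation (L.map (liftWalk n w)) = probMass L / n * w + expectation L := by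
  have hterm (pv : ℝ × ℝ) : (liftWalk n w pv).1 * (liftWalk n w pv).2 =
      pv.1 * (w / n) + pv.1 * pv.2 := by
    simp only [liftWalk]
    field_simp
  simp only [expectation, probMass, List.map_map, Function.comp_def, hterm, List.sum_map_add,
    List.sum_map_mul_right]
  ring

namespace WTree

theorem induction_node {P : WTree → Prop}
    (node : ∀ w cs, (∀ c ∈ cs, P c) → P (node w cs)) : ∀ t, P t
  | .node w cs => node w cs fun c _ => induction_node node c

theorem totalWeight_node (w : ℝ) (cs : List WTree) :
    totalWeight (node w cs) = w + (cs.map totalWeight).sum := by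
  rw [totalWeight, List.attach_map_val]

theorem wwalks_node_nil (w : ℝ) : wwalks (node w []) = [(1, w)] := by
  rw [wwalks]

theorem wwalks_node_of_ne_nil (w : ℝ) {cs : List WTree} (hcs : cs ≠ []) :
    wwalks (node w cs) = cs.flatMap fun c => (wwalks c).map (liftWalk cs.length w) := by
  obtain ⟨c, cs, rfl⟩ := List.exists_cons_of_ne_nil hcs
  rw [wwalks, List.flatMap_subtype, List.unattach_attach]
  exact fun _ _ => rfl

theorem probMass_wwalks (t : WTree) : probMass (wwalks t) = 1 := by
  induction t using induction_node with
  | node w cs ih =>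
    rcases eq_or_ne cs [] with rfl | hcs
    · simp [wwalks_node_nil, probMass]
    have hn : (cs.length : ℝ) ≠ 0 := by simpa using hcs
    rw [wwalks_node_of_ne_nil w hcs, probMass_flatMap,
      List.map_congr_left fun c hc => by rw [probMass_map_liftWalk, ih c hc],
      List.map_const', List.sum_replicate, nsmul_eq_mul]
    field_simp

theorem expectation_wwalks (t : WTree) : expectation (wwalks t) = totalWeight t := by
  induction t using induction_node with
  | node w cs ih =>
    rcases eq_or_ne cs [] with rfl | hcs
    · simp [wwalks_node_nil, expectation, totalWeight_node]
    have hn : (cs.length : ℝ) ≠ 0 := by simpa using hcs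
    rw [wwalks_node_of_ne_nil w hcs, expectation_flatMap, totalWeight_node,
      List.map_congr_left fun c hc => by
        rw [expectation_map_liftWalk _ hn, probMass_wwalks, ih c hc],
      List.sum_map_add, List.map_const', List.sum_replicate, nsmul_eq_mul]
    field_simp

end WTree

open WTree in
theorem weighted_knuth_unbiased_general (t : WTree) :
    ((wwalks t).map (fun pv => pv.1 * pv.2)).sum = totalWeight t :=
  expectation_wwalks t

open WTree in
/-- **The weighted Knuth estimator is unbiased for the total weight**: for a
finite rooted tree with nonnegative node weights, the expected value of the
output `Σ_j (∏_{l<j} d_l)·w(n_j)` along a uniformly random root-to-leaf path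
equals the total weight `Σ_{v ∈ T} w(v)` of the tree. -/
theorem weighted_knuth_unbiased (t : WTree) (hw : allNonneg t) :
    ((wwalks t).map (fun pv => pv.1 * pv.2)).sum = totalWeight t :=
  weighted_knuth_unbiased_general t
end
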